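/- arXiv:1802.09714 — 2 statements merged into one kernel-verified Lean document; each statement's English description precedes it below -/
import Mathlib

section
/- Let d, M be positive integers, x_1, …, x_M ∈ ℝ^d, r_1, …, r_M ∈ ℝ, ζ > 0, ε > 0. Define g(w, u) = Σ_{i=1}^M [u_i (r_i − ⟨x_i, w⟩)² + (1 − u_i) ε] + ζ‖w‖² and u*(w)_i = 1 if (r_i − ⟨x_i, w⟩)² < ε, else 0. Let w⁽⁰⁾ ∈ ℝ^d be arbitrary and for t ≥ 0 set u⁽ᵗ⁾ = u*(w⁽ᵗ⁾) and w⁽ᵗ⁺¹⁾ = (Σ_{i=1}^M u_i⁽ᵗ⁾ x_i x_iᵀ + ζ I)⁻¹ (Σ_{i=1}^M u_i⁽ᵗ⁾ r_i x_i). Then for every t ≥ 1, g(w⁽ᵗ⁻¹⁾, u⁽ᵗ⁻¹⁾) ≥ g(w⁽ᵗ⁾, u⁽ᵗ⁾) + ζ‖w⁽ᵗ⁾ − w⁽ᵗ⁻¹⁾‖². -/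
open scoped RealInnerProductSpace

/-!
For fixed weights `u ≥ 0`, the surrogate `g (·) u` is, up to the constant `∑ (1 - uᵢ) ε`, the
weighted ridge loss `∑ uᵢ (rᵢ - ⟪xᵢ, w⟫)² + ζ ‖w‖²`. The update `w⁺` solves its normal equations,
so the cross term vanishes in the expansion around `w⁺`, leaving
`loss w = loss w⁺ + ∑ uᵢ ⟪xᵢ, w - w⁺⟫² + ζ ‖w - w⁺‖² ≥ loss w⁺ + ζ ‖w - w⁺‖²`.
Re-thresholding at `w⁺` can only decrease `g` further: with `a = (rᵢ - ⟪xᵢ, w⁺⟫)²`, the new term is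
`min a ε`, which is at most the convex combination `uᵢ a + (1 - uᵢ) ε`.
-/

section WeightedRidge

variable {ι E : Type*} [Fintype ι] [NormedAddCommGroup E] [InnerProductSpace ℝ E]

def weightedRidgeLoss (x : ι → E) (r u : ι → ℝ) (ζ : ℝ) (w : E) : ℝ :=
  ∑ i, u i * (r i - ⟪x i, w⟫) ^ 2 + ζ * ‖w‖ ^ 2

theorem weightedRidgeLoss_eq_add_of_normal_eq {x : ι → E} {r u : ι → ℝ} {ζ : ℝ} {w₀ : E}
    (hw₀ : ∑ i, (u i * ⟪x i, w₀⟫) • x i + ζ • w₀ = ∑ i, u i • r i • x i) (w : E) :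
    weightedRidgeLoss x r u ζ w = weightedRidgeLoss x r u ζ w₀ +
      (∑ i, u i * ⟪x i, w - w₀⟫ ^ 2 + ζ * ‖w - w₀‖ ^ 2) := by
  obtain ⟨δ, rfl⟩ : ∃ δ, w = w₀ + δ := ⟨w - w₀, by abel⟩
  rw [add_sub_cancel_left]
  have hcross : ∑ i, u i * ⟪x i, w₀⟫ * ⟪x i, δ⟫ + ζ * ⟪w₀, δ⟫ = ∑ i, u i * r i * ⟪x i, δ⟫ := by
    simpa [sum_inner, inner_add_left, real_inner_smul_left, mul_assoc]
      using congrArg (⟪·, δ⟫) hw₀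
  simp only [weightedRidgeLoss, inner_add_right, norm_add_sq_real]
  have hexpand : ∀ i, u i * (r i - (⟪x i, w₀⟫ + ⟪x i, δ⟫)) ^ 2 = u i * (r i - ⟪x i, w₀⟫) ^ 2
      + u i * ⟪x i, δ⟫ ^ 2 + 2 * (u i * ⟪x i, w₀⟫ * ⟪x i, δ⟫ - u i * r i * ⟪x i, δ⟫) :=
    fun i => by ring
  simp only [hexpand, Finset.sum_add_distrib, ← Finset.mul_sum, Finset.sum_sub_distrib]
  linear_combination 2 * hcross

theorem weightedRidgeLoss_add_le_of_normal_eq {x : ι → E} {r u : ι → ℝ} {ζ : ℝ} {w₀ : E}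
    (hu : ∀ i, 0 ≤ u i)
    (hw₀ : ∑ i, (u i * ⟪x i, w₀⟫) • x i + ζ • w₀ = ∑ i, u i • r i • x i) (w : E) :
    weightedRidgeLoss x r u ζ w₀ + ζ * ‖w - w₀‖ ^ 2 ≤ weightedRidgeLoss x r u ζ w := by
  rw [weightedRidgeLoss_eq_add_of_normal_eq hw₀ w]
  have : 0 ≤ ∑ i, u i * ⟪x i, w - w₀⟫ ^ 2 :=
    Finset.sum_nonneg fun i _ => mul_nonneg (hu i) (sq_nonneg _)
  linarith

end WeightedRidge

namespace Matrix

theorem posDef_sum_smul_vecMulVec_add_smul_one {ι n : Type*} [Fintype ι] [Fintype n]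
    [DecidableEq n] (x : ι → n → ℝ) {u : ι → ℝ} (hu : ∀ i, 0 ≤ u i) {ζ : ℝ} (hζ : 0 < ζ) :
    (∑ i, u i • vecMulVec (x i) (x i) + ζ • (1 : Matrix n n ℝ)).PosDef :=
  PosDef.posSemidef_add
    (posSemidef_sum _ fun i _ => by
      simpa using (posSemidef_vecMulVec_self_star (x i)).smul (hu i))
    (PosDef.one.smul hζ)

theorem sum_smul_vecMulVec_add_smul_one_mulVec {ι n R : Type*} [Fintype ι] [Fintype n]
    [DecidableEq n] [CommRing R] (x : ι → n → R) (u : ι → R) (ζ : R) (v : n → R) :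
    (∑ i, u i • vecMulVec (x i) (x i) + ζ • (1 : Matrix n n R)) *ᵥ v =
      ∑ i, (u i * (x i ⬝ᵥ v)) • x i + ζ • v := by
  simp [add_mulVec, sum_mulVec, smul_mulVec, vecMulVec_mulVec, mul_smul]

end Matrix

open Matrix in
theorem EuclideanSpace.normal_eq_of_eq_inv_mulVec {ι n : Type*} [Fintype ι] [Fintype n]
    [DecidableEq n] {x : ι → EuclideanSpace ℝ n} {r u : ι → ℝ} (hu : ∀ i, 0 ≤ u i) {ζ : ℝ}
    (hζ : 0 < ζ) {w : EuclideanSpace ℝ n}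
    (hw : w.ofLp = (∑ i, u i • vecMulVec (x i).ofLp (x i).ofLp + ζ • 1)⁻¹ *ᵥ
      ∑ i, u i • r i • (x i).ofLp) :
    ∑ i, (u i * ⟪x i, w⟫) • x i + ζ • w = ∑ i, u i • r i • x i := by
  have hA := (posDef_sum_smul_vecMulVec_add_smul_one (fun i => (x i).ofLp) hu hζ).isUnit
  have := congrArg ((∑ i, u i • vecMulVec (x i).ofLp (x i).ofLp + ζ • 1) *ᵥ ·) hw
  simp only [mulVec_mulVec, mul_nonsing_inv _ ((isUnit_iff_isUnit_det _).1 hA), one_mulVec,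
    sum_smul_vecMulVec_add_smul_one_mulVec] at this
  apply WithLp.ofLp_injective 2
  simpa [EuclideanSpace.inner_eq_star_dotProduct, dotProduct_comm] using this

theorem ite_lt_mul_add_one_sub_mul_le (a ε v : ℝ) (hv₀ : 0 ≤ v) (hv₁ : v ≤ 1) :
    (if a < ε then 1 else 0) * a + (1 - if a < ε then 1 else 0) * ε ≤ v * a + (1 - v) * ε := by
  split_ifs <;> nlinarith

theorem stmt_6_general (d M : ℕ)
    (x : Fin M → EuclideanSpace ℝ (Fin d)) (r : Fin M → ℝ)
    (ζ ε : ℝ) (hζ : 0 < ζ)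
    (g : EuclideanSpace ℝ (Fin d) → (Fin M → ℝ) → ℝ)
    (hg : ∀ w' u', g w' u' =
      (∑ i, (u' i * (r i - ⟪x i, w'⟫) ^ 2 + (1 - u' i) * ε)) + ζ * ‖w'‖ ^ 2)
    (w : ℕ → EuclideanSpace ℝ (Fin d)) (u : ℕ → Fin M → ℝ)
    (hu : ∀ t i, u t i = if (r i - ⟪x i, w t⟫) ^ 2 < ε then 1 else 0)
    (hw : ∀ t, w (t + 1) =
      ((∑ i, u t i • Matrix.vecMulVec (x i) (x i)) +
        ζ • (1 : Matrix (Fin d) (Fin d) ℝ))⁻¹.mulVec (∑ i, u t i • r i • x i)) :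
    ∀ t : ℕ, 1 ≤ t →
      g (w (t - 1)) (u (t - 1)) ≥ g (w t) (u t) + ζ * ‖w t - w (t - 1)‖ ^ 2 := by
  intro t ht
  obtain ⟨s, rfl⟩ := Nat.exists_eq_add_of_le' ht
  rw [Nat.add_sub_cancel]
  have hu_mem : ∀ t i, 0 ≤ u t i ∧ u t i ≤ 1 := by
    intro t i
    rw [hu]
    split_ifs <;> norm_num
  have hg_eq : ∀ w' u', g w' u' = weightedRidgeLoss x r u' ζ w' + ∑ i, (1 - u' i) * ε := by
    intro w' u'
    rw [hg, weightedRidgeLoss, Finset.sum_add_distrib]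
    ring
  have hdescent := weightedRidgeLoss_add_le_of_normal_eq (fun i => (hu_mem s i).1)
    (EuclideanSpace.normal_eq_of_eq_inv_mulVec (fun i => (hu_mem s i).1) hζ (hw s)) (w s)
  have hreweight : g (w (s + 1)) (u (s + 1)) ≤ g (w (s + 1)) (u s) := by
    rw [hg, hg]
    refine add_le_add_left (Finset.sum_le_sum fun i _ => ?_) _
    rw [hu (s + 1) i]
    exact ite_lt_mul_add_one_sub_mul_le _ _ _ (hu_mem s i).1 (hu_mem s i).2
  rw [norm_sub_rev]
  linarith [hg_eq (w s) (u s), hg_eq (w (s + 1)) (u s)]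

/-- Lemma 1 of the paper: sufficient decrease of the surrogate
along the reweighted iteration. -/
theorem stmt_6 (d M : ℕ) (hd : 0 < d) (hM : 0 < M)
    (x : Fin M → EuclideanSpace ℝ (Fin d)) (r : Fin M → ℝ)
    (ζ ε : ℝ) (hζ : 0 < ζ) (hε : 0 < ε)
    (g : EuclideanSpace ℝ (Fin d) → (Fin M → ℝ) → ℝ)
    (hg : ∀ w' u', g w' u' =
      (∑ i, (u' i * (r i - ⟪x i, w'⟫) ^ 2 + (1 - u' i) * ε)) + ζ * ‖w'‖ ^ 2)
    (w : ℕ → EuclideanSpace ℝ (Fin d)) (u : ℕ → Fin M → ℝ)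
    (hu : ∀ t i, u t i = if (r i - ⟪x i, w t⟫) ^ 2 < ε then 1 else 0)
    (hw : ∀ t, w (t + 1) =
      ((∑ i, u t i • Matrix.vecMulVec (x i) (x i)) +
        ζ • (1 : Matrix (Fin d) (Fin d) ℝ))⁻¹.mulVec (∑ i, u t i • r i • x i)) :
    ∀ t : ℕ, 1 ≤ t →
      g (w (t - 1)) (u (t - 1)) ≥ g (w t) (u t) + ζ * ‖w t - w (t - 1)‖ ^ 2 :=
  stmt_6_general d M x r ζ ε hζ g hg w u hu hw
end

section
/- Let d, M be positive integers, x_1, …, x_M ∈ ℝ^d, r_1, …, r_M ∈ ℝ, ζ > 0, ε > 0. Define the capped-ℓ2 objective O(w) = Σ_{i=1}^M min((r_i − ⟨x_i, w⟩)², ε) + ζ‖w‖² and u*(w)_i = 1 if (r_i − ⟨x_i, w⟩)² < ε, else 0. Let w⁽⁰⁾ ∈ ℝ^d and for t ≥ 0 set u⁽ᵗ⁾ = u*(w⁽ᵗ⁾) and w⁽ᵗ⁺¹⁾ = (Σ_{i=1}^M u_i⁽ᵗ⁾ x_i x_iᵀ + ζ I)⁻¹ (Σ_{i=1}^M u_i⁽ᵗ⁾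 r_i x_i). Then for every t ≥ 1, O(w⁽ᵗ⁻¹⁾) ≥ O(w⁽ᵗ⁾) + ζ‖w⁽ᵗ⁾ − w⁽ᵗ⁻¹⁾‖²; in particular the sequence (O(w⁽ᵗ⁾))_{t≥0} is nonincreasing. -/
/-!
For weights `u ∈ {0,1}^M` the capped loss is majorized by the weighted ridge loss
`∑ uᵢ (rᵢ - ⟪xᵢ, w⟫)² + ζ‖w‖²` plus the constant `∑ (1 - uᵢ) ε`, with equality when `u = u*(w)`.
The ridge loss is a quadratic whose Hessian dominates `2ζ I`, so it exceeds its value at its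
minimizer `w⁺` (the solution of the normal equations) by at least `ζ‖w - w⁺‖²`. Hence
`O(w) = majorant(w) ≥ majorant(w⁺) + ζ‖w - w⁺‖² ≥ O(w⁺) + ζ‖w - w⁺‖²`.
-/

open scoped RealInnerProductSpace
open Finset Matrix

section Loss

variable {ι E : Type*} [Fintype ι] [NormedAddCommGroup E] [InnerProductSpace ℝ E]

def ridgeLoss (u : ι → ℝ) (x : ι → E) (r : ι → ℝ) (ζ : ℝ) (w : E) : ℝ :=
  ∑ i, u i * (r i - ⟪x i, w⟫) ^ 2 + ζ * ‖w‖ ^ 2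

def cappedLoss (x : ι → E) (r : ι → ℝ) (ζ ε : ℝ) (w : E) : ℝ :=
  ∑ i, min ((r i - ⟪x i, w⟫) ^ 2) ε + ζ * ‖w‖ ^ 2

theorem ridgeLoss_add_of_normal_eq {u : ι → ℝ} {x : ι → E} {r : ι → ℝ} {ζ : ℝ} {w₀ : E}
    (h : ∑ i, (u i * (r i - ⟪x i, w₀⟫)) • x i = ζ • w₀) (v : E) :
    ridgeLoss u x r ζ (w₀ + v) =
      ridgeLoss u x r ζ w₀ + ∑ i, u i * ⟪x i, v⟫ ^ 2 + ζ * ‖v‖ ^ 2 := by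
  have hcross : ∑ i, u i * (r i - ⟪x i, w₀⟫) * ⟪x i, v⟫ = ζ * ⟪w₀, v⟫ := by
    simp_rw [← real_inner_smul_left, ← sum_inner, h]
  have hexpand : ∀ i, u i * (r i - (⟪x i, w₀⟫ + ⟪x i, v⟫)) ^ 2 =
      u i * (r i - ⟪x i, w₀⟫) ^ 2 - 2 * (u i * (r i - ⟪x i, w₀⟫) * ⟪x i, v⟫) +
        u i * ⟪x i, v⟫ ^ 2 := fun i => by ring
  simp only [ridgeLoss, inner_add_right, norm_add_sq_real, hexpand, sum_add_distrib,
    sum_sub_distrib, ← mul_sum, hcross]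
  ring

theorem ridgeLoss_add_sq_le_of_normal_eq {u : ι → ℝ} {x : ι → E} {r : ι → ℝ} {ζ : ℝ} {w₀ : E}
    (hu : 0 ≤ u) (h : ∑ i, (u i * (r i - ⟪x i, w₀⟫)) • x i = ζ • w₀) (w : E) :
    ridgeLoss u x r ζ w₀ + ζ * ‖w - w₀‖ ^ 2 ≤ ridgeLoss u x r ζ w := by
  have hnonneg : 0 ≤ ∑ i, u i * ⟪x i, w - w₀⟫ ^ 2 :=
    sum_nonneg fun i _ => mul_nonneg (hu i) (sq_nonneg _)
  have := ridgeLoss_add_of_normal_eq h (w - w₀)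
  rw [add_sub_cancel] at this
  linarith

theorem min_le_mul_add_one_sub_mul {a ε c : ℝ} (hc : c = 0 ∨ c = 1) :
    min a ε ≤ c * a + (1 - c) * ε := by
  rcases hc with rfl | rfl <;> simp

theorem min_eq_ite_mul_add (a ε : ℝ) :
    min a ε = (if a < ε then 1 else 0) * a + (1 - if a < ε then 1 else 0) * ε := by
  split_ifs with h
  · simp [h.le]
  · simp [not_lt.1 h]

theorem cappedLoss_le_ridgeLoss_add {u : ι → ℝ} (hu : ∀ i, u i = 0 ∨ u i = 1)
    (x : ι → E) (r : ι → ℝ) (ζ ε : ℝ) (w : E) :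
    cappedLoss x r ζ ε w ≤ ridgeLoss u x r ζ w + ∑ i, (1 - u i) * ε := by
  have := sum_le_sum fun i (_ : i ∈ univ) =>
    min_le_mul_add_one_sub_mul (a := (r i - ⟪x i, w⟫) ^ 2) (ε := ε) (hu i)
  simp only [cappedLoss, ridgeLoss, sum_add_distrib] at this ⊢
  linarith

theorem cappedLoss_eq_ridgeLoss_add {u : ι → ℝ} {x : ι → E} {r : ι → ℝ} {ε : ℝ} {w : E}
    (hu : ∀ i, u i = if (r i - ⟪x i, w⟫) ^ 2 < ε then 1 else 0) (ζ : ℝ) :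
    cappedLoss x r ζ ε w = ridgeLoss u x r ζ w + ∑ i, (1 - u i) * ε := by
  simp only [cappedLoss, ridgeLoss, hu, min_eq_ite_mul_add _ ε, sum_add_distrib]
  ring

theorem cappedLoss_add_sq_le_of_normal_eq {u : ι → ℝ} {x : ι → E} {r : ι → ℝ} {ζ ε : ℝ}
    {w w' : E} (hu : ∀ i, u i = if (r i - ⟪x i, w⟫) ^ 2 < ε then 1 else 0)
    (h : ∑ i, (u i * (r i - ⟪x i, w'⟫)) • x i = ζ • w') :
    cappedLoss x r ζ ε w' + ζ * ‖w' - w‖ ^ 2 ≤ cappedLoss x r ζ ε w := by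
  have hu01 : ∀ i, u i = 0 ∨ u i = 1 := fun i => by rw [hu i]; split_ifs <;> simp
  have hu0 : 0 ≤ u := fun i => by rcases hu01 i with hi | hi <;> simp [hi]
  have := ridgeLoss_add_sq_le_of_normal_eq hu0 h w
  rw [norm_sub_rev] at this
  linarith [cappedLoss_le_ridgeLoss_add hu01 x r ζ ε w', cappedLoss_eq_ridgeLoss_add hu ζ]

end Loss

section RidgeMatrix

variable {ι n : Type*} [Fintype ι] [Fintype n] [DecidableEq n]

def ridgeMatrix (u : ι → ℝ) (x : ι → EuclideanSpace ℝ n) (ζ : ℝ) : Matrix n n ℝ :=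
  ∑ i, u i • vecMulVec (x i) (x i) + ζ • 1

theorem ridgeMatrix_mulVec (u : ι → ℝ) (x : ι → EuclideanSpace ℝ n) (ζ : ℝ)
    (v : EuclideanSpace ℝ n) :
    ridgeMatrix u x ζ *ᵥ v = WithLp.ofLp (∑ i, (u i * ⟪x i, v⟫) • x i + ζ • v) := by
  simp [ridgeMatrix, add_mulVec, sum_mulVec, smul_mulVec, vecMulVec_mulVec,
    EuclideanSpace.inner_eq_star_dotProduct, smul_smul, dotProduct_comm]

theorem posDef_ridgeMatrix {u : ι → ℝ} (hu : 0 ≤ u) (x : ι → EuclideanSpace ℝ n) {ζ : ℝ}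
    (hζ : 0 < ζ) : (ridgeMatrix u x ζ).PosDef :=
  PosDef.posSemidef_add
    (posSemidef_sum univ fun i _ => by
      simpa using (posSemidef_vecMulVec_self_star (x i).ofLp).smul (hu i))
    (PosDef.one.smul hζ)

theorem normal_eq_of_ofLp_eq_inv_mulVec {u : ι → ℝ} (hu : 0 ≤ u) {x : ι → EuclideanSpace ℝ n}
    {r : ι → ℝ} {ζ : ℝ} (hζ : 0 < ζ) {w : EuclideanSpace ℝ n}
    (hw : w.ofLp = (ridgeMatrix u x ζ)⁻¹ *ᵥ ∑ i, u i • r i • (x i).ofLp) :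
    ∑ i, (u i * (r i - ⟪x i, w⟫)) • x i = ζ • w := by
  have hA : IsUnit (ridgeMatrix u x ζ).det :=
    (isUnit_iff_isUnit_det _).1 (posDef_ridgeMatrix hu x hζ).isUnit
  have hnormal : ridgeMatrix u x ζ *ᵥ w = ∑ i, u i • r i • (x i).ofLp := by
    rw [hw, mulVec_mulVec, mul_nonsing_inv _ hA, one_mulVec]
  rw [ridgeMatrix_mulVec] at hnormal
  have : ∑ i, (u i * ⟪x i, w⟫) • x i + ζ • w = ∑ i, (u i * r i) • x i :=
    WithLp.ofLp_injective 2 (by simpa [smul_smul] using hnormal)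
  simp only [mul_sub, sub_smul, sum_sub_distrib, ← this]
  abel

end RidgeMatrix

theorem stmt_7_general (d M : ℕ)
    (x : Fin M → EuclideanSpace ℝ (Fin d)) (r : Fin M → ℝ)
    (ζ ε : ℝ) (hζ : 0 < ζ)
    (O : EuclideanSpace ℝ (Fin d) → ℝ)
    (hO : ∀ w', O w' = (∑ i, min ((r i - ⟪x i, w'⟫) ^ 2) ε) + ζ * ‖w'‖ ^ 2)
    (w : ℕ → EuclideanSpace ℝ (Fin d)) (u : ℕ → Fin M → ℝ)
    (hu : ∀ t i, u t i = if (r i - ⟪x i, w t⟫) ^ 2 < ε then 1 else 0)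
    (hw : ∀ t, w (t + 1) =
      ((∑ i, u t i • Matrix.vecMulVec (x i) (x i)) +
        ζ • (1 : Matrix (Fin d) (Fin d) ℝ))⁻¹.mulVec (∑ i, u t i • r i • x i)) :
    (∀ t : ℕ, 1 ≤ t → O (w (t - 1)) ≥ O (w t) + ζ * ‖w t - w (t - 1)‖ ^ 2) ∧
    (∀ s t : ℕ, s ≤ t → O (w t) ≤ O (w s)) := by
  have hO : O = cappedLoss x r ζ ε := funext hO
  have hu0 : ∀ t, 0 ≤ u t := fun t i => by rw [hu t i]; split_ifs <;> norm_num
  have step : ∀ t, O (w (t + 1)) + ζ * ‖w (t + 1) - w t‖ ^ 2 ≤ O (w t) := fun t =>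
    hO ▸ cappedLoss_add_sq_le_of_normal_eq (hu t)
      (normal_eq_of_ofLp_eq_inv_mulVec (hu0 t) hζ (hw t))
  refine ⟨fun t ht => ?_, fun s t hst => ?_⟩
  · obtain ⟨t, rfl⟩ := Nat.exists_eq_add_of_le' ht
    simpa using step t
  · refine antitone_nat_of_succ_le (f := fun t => O (w t)) (fun t => ?_) hst
    exact le_of_add_le_of_nonneg_left (step t) (by positivity)

/-- sufficient decrease of the capped-ℓ2 objective along the
reweighted iteration; in particular the objective values are nonincreasing. -/
theorem stmt_7 (d M : ℕ) (hd : 0 < d) (hM : 0 < M)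
    (x : Fin M → EuclideanSpace ℝ (Fin d)) (r : Fin M → ℝ)
    (ζ ε : ℝ) (hζ : 0 < ζ) (hε : 0 < ε)
    (O : EuclideanSpace ℝ (Fin d) → ℝ)
    (hO : ∀ w', O w' = (∑ i, min ((r i - ⟪x i, w'⟫) ^ 2) ε) + ζ * ‖w'‖ ^ 2)
    (w : ℕ → EuclideanSpace ℝ (Fin d)) (u : ℕ → Fin M → ℝ)
    (hu : ∀ t i, u t i = if (r i - ⟪x i, w t⟫) ^ 2 < ε then 1 else 0)
    (hw : ∀ t, w (t + 1) =
      ((∑ i, u t i • Matrix.vecMulVec (x i) (x i)) +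
        ζ • (1 : Matrix (Fin d) (Fin d) ℝ))⁻¹.mulVec (∑ i, u t i • r i • x i)) :
    (∀ t : ℕ, 1 ≤ t → O (w (t - 1)) ≥ O (w t) + ζ * ‖w t - w (t - 1)‖ ^ 2) ∧
    (∀ s t : ℕ, s ≤ t → O (w t) ≤ O (w s)) :=
  stmt_7_general d M x r ζ ε hζ O hO w u hu hw
end
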